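/- arXiv:0707.1828 — 8 statements merged into one kernel-verified Lean document; each statement's English description precedes it below -/
import Mathlib

section
/- For real a > b > 0, the logarithm of the binomial coefficient satisfies log(Γ(an+1)/(Γ(bn+1)·Γ((a-b)n+1))) = n·a·Φ(b/a) + (1/2)·log(a/(2π·b·(a-b)·n)) + O(1/n) as n → ∞, where Φ(x) = -x·log(x) - (1-x)·log(1-x). -/
/-!
Write `log Γ(x + 1) = (x + 1/2) log x - x + log (2π) / 2 + μ x`, where `μ = stirlingRemainder` is
Binet's function. The step `μ x - μ (x + 1) = (x + 1/2) log (1 + 1/x) - 1` expands as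
`∑_{k ≥ 1} t^(2k) / (2k + 1)` with `t = 1 / (2x + 1)`, so it lies between `0` and
`1/(12x) - 1/(12(x+1))`. Since `μ (x + n) → 0` (Stirling's formula for `n!` together with the
Euler limit for `Γ`), telescoping gives `0 ≤ μ x ≤ 1/(12x)`. In the three Gamma factors the main
terms combine exactly into `n a Φ(b/a) + 1/2 log (a / (2π b (a - b) n))`, leaving
`μ (an) - μ (bn) - μ ((a - b) n) = O(1/n)`.
-/

open Real Asymptotics Filter

noncomputable def entropy (x : ℝ) : ℝ := -x * Real.log x - (1 - x) * Real.log (1 - x)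

open Topology
open scoped Nat

theorem tendsto_add_mul_log_add_div_self (c d : ℝ) :
    Tendsto (fun t : ℝ => (t + d) * log ((t + c) / t)) atTop (𝓝 c) := by
  have hlog : Tendsto (fun t : ℝ => log (1 + c / t)) atTop (𝓝 0) := by
    have h := (tendsto_const_nhds (x := c)).div_atTop tendsto_id |>.const_add 1
    rw [add_zero] at h
    simpa [Function.comp_def] using (continuousAt_log one_ne_zero).tendsto.comp h
  have h := (tendsto_mul_log_one_add_div_atTop c).add (hlog.const_mul d)
  rw [mul_zero, add_zero] at h
  refine h.congr' ?_
  filter_upwards [eventually_gt_atTop 0] with t ht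
  rw [add_div, div_self ht.ne', add_mul]

theorem tendsto_log_Gamma_add_nat_succ_sub {x : ℝ} (hx : 0 < x) :
    Tendsto (fun n : ℕ => log (Gamma (x + (n + 1))) - log n ! - x * log n) atTop (𝓝 0) := by
  have h := (BohrMollerup.tendsto_log_gamma hx).const_sub (log (Gamma x))
  rw [sub_self] at h
  refine h.congr fun n => ?_
  have hfeq {y : ℝ} (hy : 0 < y) : (log ∘ Gamma) (y + 1) = (log ∘ Gamma) y + log y := by
    simp only [Function.comp_apply, Gamma_add_one hy.ne', log_mul hy.ne' (Gamma_pos_of_pos hy).ne']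
    ring
  have := BohrMollerup.f_add_nat_eq hfeq hx (n + 1)
  simp only [Function.comp_apply, Nat.cast_add_one] at this
  rw [this, BohrMollerup.logGammaSeq]
  ring

noncomputable def stirlingRemainder (x : ℝ) : ℝ :=
  log (Gamma x) - ((x - 1 / 2) * log x - x + log (2 * π) / 2)

theorem log_Gamma_add_one_eq {x : ℝ} (hx : 0 < x) :
    log (Gamma (x + 1)) = (x + 1 / 2) * log x - x + log (2 * π) / 2 + stirlingRemainder x := by
  rw [Gamma_add_one hx.ne', log_mul hx.ne' (Gamma_pos_of_pos hx).ne', stirlingRemainder]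
  ring

theorem hasSum_stirlingRemainder_sub_add_one {x : ℝ} (hx : 0 < x) :
    HasSum (fun k : ℕ => (1 : ℝ) / (2 * (k + 1 : ℕ) + 1) * ((1 / (2 * x + 1)) ^ 2) ^ (k + 1))
      (stirlingRemainder x - stirlingRemainder (x + 1)) := by
  let f (k : ℕ) : ℝ := 1 / (2 * k + 1) * ((1 / (2 * x + 1)) ^ 2) ^ k
  change HasSum (fun k => f (k + 1)) _
  rw [hasSum_nat_add_iff]
  convert! (hasSum_log_one_add_inv hx).mul_left (x + 1 / 2) using 1
  · ext k
    simp only [f]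
    rw [pow_succ _ (2 * k), pow_mul]
    field_simp
  · have hlog : log (1 + x⁻¹) = log (x + 1) - log x := by
      rw [← log_div (by positivity) hx.ne']
      field_simp
    rw [Finset.sum_range_one, hlog, stirlingRemainder, stirlingRemainder, Gamma_add_one hx.ne',
      log_mul hx.ne' (Gamma_pos_of_pos hx).ne']
    simp only [f, Nat.cast_zero, mul_zero, zero_add, div_one, pow_zero, mul_one]
    ring

theorem stirlingRemainder_add_one_le {x : ℝ} (hx : 0 < x) :
    stirlingRemainder (x + 1) ≤ stirlingRemainder x :=
  sub_nonneg.1 <| (hasSum_stirlingRemainder_sub_add_one hx).nonneg fun _ => by positivity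

theorem stirlingRemainder_sub_add_one_le {x : ℝ} (hx : 0 < x) :
    stirlingRemainder x - stirlingRemainder (x + 1) ≤ 1 / (12 * x) - 1 / (12 * (x + 1)) := by
  set r := (1 / (2 * x + 1)) ^ 2 with hr
  have hr0 : 0 < r := by positivity
  have hr1 : 1 - r = 4 * x * (x + 1) * r := by
    rw [hr]; field_simp; ring
  have hgeom : HasSum (fun k : ℕ => r ^ (k + 1) / 3) (1 / (12 * x) - 1 / (12 * (x + 1))) := by
    have hlt : r < 1 := sub_pos.1 <| by rw [hr1]; positivity
    convert! ((hasSum_geometric_of_lt_one hr0.le hlt).mul_left r).div_const 3 using 1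
    · ext k; ring
    · rw [hr1]; field_simp; ring
  refine hasSum_le (fun k => ?_) (hasSum_stirlingRemainder_sub_add_one hx) hgeom
  rw [div_eq_mul_one_div (r ^ (k + 1)), mul_comm]
  gcongr
  push_cast
  linarith [(k.cast_nonneg : (0 : ℝ) ≤ k)]

theorem stirlingRemainder_natCast {n : ℕ} (hn : n ≠ 0) :
    stirlingRemainder n = log (Stirling.stirlingSeq n) - log π / 2 := by
  have hn' : (0 : ℝ) < n := by positivity
  rw [Stirling.log_stirlingSeq_formula, ← Gamma_nat_eq_factorial, log_Gamma_add_one_eq hn',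
    log_mul two_ne_zero hn'.ne', log_div hn'.ne' (exp_pos 1).ne', log_exp,
    log_mul two_ne_zero pi_pos.ne']
  ring

theorem tendsto_stirlingRemainder_natCast :
    Tendsto (fun n : ℕ => stirlingRemainder n) atTop (𝓝 0) := by
  have h := ((continuousAt_log (by positivity)).tendsto.comp
    Stirling.tendsto_stirlingSeq_sqrt_pi).sub_const (log π / 2)
  rw [Function.comp_def, log_sqrt pi_pos.le, sub_self] at h
  refine h.congr' ?_
  filter_upwards [eventually_ne_atTop 0] with n hn
  exact (stirlingRemainder_natCast hn).symm

theorem tendsto_stirlingRemainder_add_nat {x : ℝ} (hx : 0 < x) :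
    Tendsto (fun n : ℕ => stirlingRemainder (x + n)) atTop (𝓝 0) := by
  rw [← tendsto_add_atTop_iff_nat 1]
  have hlog := (tendsto_add_mul_log_add_div_self (x + 1) (x + 1 / 2)).comp
    tendsto_natCast_atTop_atTop
  have h := ((tendsto_log_Gamma_add_nat_succ_sub hx).add tendsto_stirlingRemainder_natCast).add
    (hlog.const_sub (x + 1))
  rw [add_zero, sub_self, add_zero] at h
  refine h.congr' ?_
  filter_upwards [eventually_ne_atTop 0] with n hn
  have hn' : (0 : ℝ) < n := by positivity
  -- `μ (x + n + 1) = [log Γ(x + n + 1) - log n! - x log n] + μ n + (x + 1)`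
  --   `- (n + x + 1/2) log ((n + x + 1) / n)`
  rw [Function.comp_apply, show (n : ℝ) + (x + 1) = x + (n + 1) by ring, Nat.cast_succ,
    ← Gamma_nat_eq_factorial, log_Gamma_add_one_eq hn', log_div (by positivity) hn'.ne']
  simp only [stirlingRemainder]
  ring

theorem stirlingRemainder_nonneg {x : ℝ} (hx : 0 < x) : 0 ≤ stirlingRemainder x := by
  have hanti : Antitone fun n : ℕ => stirlingRemainder (x + n) :=
    antitone_nat_of_succ_le fun n => by
      rw [Nat.cast_succ, ← add_assoc]
      exact stirlingRemainder_add_one_le (by positivity)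
  simpa using hanti.le_of_tendsto (tendsto_stirlingRemainder_add_nat hx) 0

theorem stirlingRemainder_le {x : ℝ} (hx : 0 < x) : stirlingRemainder x ≤ 1 / (12 * x) := by
  have hmono : Monotone fun n : ℕ => stirlingRemainder (x + n) - 1 / (12 * (x + n)) :=
    monotone_nat_of_le_succ fun n => by
      have := stirlingRemainder_sub_add_one_le (x := x + n) (by positivity)
      rw [Nat.cast_succ, ← add_assoc]
      linarith
  have hden : Tendsto (fun n : ℕ => 12 * (x + n)) atTop atTop :=
    (tendsto_atTop_add_const_left atTop x tendsto_natCast_atTop_atTop).const_mul_atTop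
      (by norm_num)
  have hlim := (tendsto_stirlingRemainder_add_nat hx).sub
    ((tendsto_const_nhds (x := (1 : ℝ))).div_atTop hden)
  rw [sub_zero] at hlim
  simpa [sub_nonpos] using hmono.ge_of_tendsto hlim 0

theorem isBigO_stirlingRemainder_const_mul {c : ℝ} (hc : 0 < c) :
    (fun t : ℝ => stirlingRemainder (c * t)) =O[atTop] fun t => 1 / t := by
  refine IsBigO.of_bound (1 / (12 * c)) ?_
  filter_upwards [eventually_gt_atTop 0] with t ht
  have hct : 0 < c * t := by positivity
  rw [norm_of_nonneg (stirlingRemainder_nonneg hct), norm_of_nonneg (by positivity)]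
  calc stirlingRemainder (c * t) ≤ 1 / (12 * (c * t)) := stirlingRemainder_le hct
    _ = 1 / (12 * c) * (1 / t) := by field_simp

theorem log_Gamma_div_Gamma_mul_Gamma_eq {a b n : ℝ} (hb : 0 < b) (hab : b < a) (hn : 0 < n) :
    log (Gamma (a * n + 1) / (Gamma (b * n + 1) * Gamma ((a - b) * n + 1)))
      = n * a * entropy (b / a) + 1 / 2 * log (a / (2 * π * b * (a - b) * n))
        + (stirlingRemainder (a * n) - stirlingRemainder (b * n)
          - stirlingRemainder ((a - b) * n)) := by
  have ha : 0 < a := hb.trans hab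
  have hc : 0 < a - b := sub_pos.2 hab
  have hG {c : ℝ} (h : 0 < c) : Gamma (c * n + 1) ≠ 0 := (Gamma_pos_of_pos (by positivity)).ne'
  have h1 : 1 - b / a = (a - b) / a := by field_simp
  rw [log_div (hG ha) (mul_ne_zero (hG hb) (hG hc)), log_mul (hG hb) (hG hc),
    log_Gamma_add_one_eq (by positivity), log_Gamma_add_one_eq (by positivity),
    log_Gamma_add_one_eq (by positivity), entropy, h1, log_div hb.ne' ha.ne',
    log_div hc.ne' ha.ne', log_div ha.ne' (by positivity), log_mul ha.ne' hn.ne',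
    log_mul hb.ne' hn.ne', log_mul hc.ne' hn.ne', log_mul (by positivity) hn.ne',
    log_mul (by positivity) hc.ne', log_mul (by positivity) hb.ne']
  field_simp
  ring

theorem stirling_binomial_asymptotics (a b : ℝ) (hb : 0 < b) (hab : b < a) :
    (fun n : ℝ =>
        Real.log (Real.Gamma (a * n + 1) / (Real.Gamma (b * n + 1) * Real.Gamma ((a - b) * n + 1)))
          - (n * a * entropy (b / a) + (1 / 2) * Real.log (a / (2 * Real.pi * b * (a - b) * n))))
      =O[atTop] (fun n : ℝ => 1 / n) := by
  have hR := ((isBigO_stirlingRemainder_const_mul (hb.trans hab)).sub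
    (isBigO_stirlingRemainder_const_mul hb)).sub
      (isBigO_stirlingRemainder_const_mul (sub_pos.2 hab))
  refine hR.congr' ?_ EventuallyEq.rfl
  filter_upwards [eventually_gt_atTop 0] with n hn
  rw [log_Gamma_div_Gamma_mul_Gamma_eq hb hab hn, add_sub_cancel_left]
end

section
/- Let M be a module over ℂ with elements ⟨a⟩ ∈ M for each a ∈ ℂ \ {0,1}, satisfying the 4-term relation ⟨a⟩ - ⟨b⟩ + a·⟨b/a⟩ + (1-a)·⟨(1-b)/(1-a)⟩ = 0 whenever a, b, b/a, (1-b)/(1-a) ∈ ℂ \ {0,1}. Then ⟨a⟩ = ⟨1-a⟩ for all a ∈ ℂ \ {0,1}. -/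
theorem four_term_symm {M : Type*} [AddCommGroup M] [Module ℂ M] (f : ℂ → M)
    (h4 : ∀ a b : ℂ, a ≠ 0 → a ≠ 1 → b ≠ 0 → b ≠ 1 →
      b / a ≠ 0 → b / a ≠ 1 → (1 - b) / (1 - a) ≠ 0 → (1 - b) / (1 - a) ≠ 1 →
      f a - f b + a • f (b / a) + (1 - a) • f ((1 - b) / (1 - a)) = 0) :
    ∀ a : ℂ, a ≠ 0 → a ≠ 1 → f a = f (1 - a) := by
  have step : ∀ a b : ℂ, a ≠ 0 → a ≠ 1 → b ≠ 0 → b ≠ 1 → a ≠ b →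
      f a - f (1 - a) = f b - f (1 - b) := by
    intro a b ha0 ha1 hb0 hb1 hab
    have h1a : (1 : ℂ) - a ≠ 0 := sub_ne_zero.2 (Ne.symm ha1)
    have h1b : (1 : ℂ) - b ≠ 0 := sub_ne_zero.2 (Ne.symm hb1)
    have hba : b / a ≠ 1 := fun h => hab ((div_eq_one_iff_eq ha0).mp h).symm
    have hba' : (1 - b) / (1 - a) ≠ 1 := fun h => by
      have h' := (div_eq_one_iff_eq h1a).mp h
      exact hab (by linear_combination h')
    have h1 := h4 a b ha0 ha1 hb0 hb1 (div_ne_zero hb0 ha0) hba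
      (div_ne_zero h1b h1a) hba'
    have h2 := h4 (1 - a) (1 - b) h1a (fun h => ha0 (by linear_combination -h))
      h1b (fun h => hb0 (by linear_combination -h))
      (div_ne_zero h1b h1a) hba'
      (by rw [sub_sub_cancel, sub_sub_cancel]; exact div_ne_zero hb0 ha0)
      (by rw [sub_sub_cancel, sub_sub_cancel]; exact hba)
    rw [sub_sub_cancel, sub_sub_cancel] at h2
    have h3 : (f a - f b + a • f (b / a) + (1 - a) • f ((1 - b) / (1 - a)))
        - (f (1 - a) - f (1 - b) + (1 - a) • f ((1 - b) / (1 - a)) + a • f (b / a)) = 0 := by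
      rw [h1, h2, sub_zero]
    have h4' : f a - f (1 - a) - (f b - f (1 - b)) = 0 := by
      rw [← h3]; abel
    exact sub_eq_zero.mp h4'
  intro a ha0 ha1
  have hc : f (-1 : ℂ) - f (1 - (-1 : ℂ)) = f 2 - f (1 - 2 : ℂ) :=
    step (-1) 2 (by norm_num) (by norm_num) (by norm_num) (by norm_num) (by norm_num)
  have hc' : f (2 : ℂ) - f (-1 : ℂ) = 0 := by
    have e1 : (1 : ℂ) - (-1) = 2 := by norm_num
    have e2 : (1 : ℂ) - 2 = -1 := by norm_num
    rw [e1, e2] at hc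
    have h2 : ((2 : ℂ)) • (f (2 : ℂ) - f (-1 : ℂ)) = 0 := by
      rw [two_smul]
      have e : f (2 : ℂ) - f (-1 : ℂ) + (f 2 - f (-1)) =
          (f (2 : ℂ) - f (-1 : ℂ)) - (f (-1 : ℂ) - f (2 : ℂ)) := by abel
      rw [e, hc, sub_self]
    have h2' : (((2 : ℂ))⁻¹ * 2) • (f (2 : ℂ) - f (-1 : ℂ)) = 0 := by
      rw [mul_smul, h2, smul_zero]
    have e3 : ((2 : ℂ))⁻¹ * 2 = 1 := by norm_num
    rw [e3, one_smul] at h2'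
    exact h2'
  by_cases h2a : a = 2
  · subst h2a
    have e2 : (1 : ℂ) - 2 = -1 := by norm_num
    rw [e2]
    exact sub_eq_zero.mp hc'
  · have h := step a 2 ha0 ha1 (by norm_num) (by norm_num) h2a
    have e2 : (1 : ℂ) - 2 = -1 := by norm_num
    rw [e2, hc'] at h
    exact sub_eq_zero.mp h
end

section
/- Let M be a module over ℂ with elements ⟨a⟩ ∈ M for each a ∈ ℂ \ {0,1}, satisfying the 4-term relation ⟨a⟩ - ⟨b⟩ + a·⟨b/a⟩ + (1-a)·⟨(1-b)/(1-a)⟩ = 0 whenever a, b, b/a, (1-b)/(1-a) ∈ ℂ \ {0,1}. Then ⟨1/a⟩ = -(1/a)·⟨a⟩ for all a ∈ ℂ \ {0,1}. -/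
theorem four_term_inv {M : Type*} [AddCommGroup M] [Module ℂ M] (f : ℂ → M)
    (h4 : ∀ a b : ℂ, a ≠ 0 → a ≠ 1 → b ≠ 0 → b ≠ 1 →
      b / a ≠ 0 → b / a ≠ 1 → (1 - b) / (1 - a) ≠ 0 → (1 - b) / (1 - a) ≠ 1 →
      f a - f b + a • f (b / a) + (1 - a) • f ((1 - b) / (1 - a)) = 0) :
    ∀ a : ℂ, a ≠ 0 → a ≠ 1 → f (1 / a) = -(1 / a) • f a := by
  -- Key symmetric relation
  have key : ∀ x y : ℂ, x ≠ 0 → x ≠ 1 → y ≠ 0 → y ≠ 1 → x ≠ y →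
      (y - 1) • (f x + x • f (1/x)) + (1 - x) • (f y + y • f (1/y)) = 0 := by
    intro x y hx0 hx1 hy0 hy1 hxy
    have hyx : y - x ≠ 0 := sub_ne_zero.mpr (Ne.symm hxy)
    have hy1' : y - 1 ≠ 0 := sub_ne_zero.mpr hy1
    have hx1' : (1:ℂ) - x ≠ 0 := sub_ne_zero.mpr (Ne.symm hx1)
    set a : ℂ := (y - 1)/(y - x) with ha
    set b : ℂ := x*(y - 1)/(y - x) with hb
    have ha0 : a ≠ 0 := div_ne_zero hy1' hyx
    have ha1 : a ≠ 1 := by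
      intro h
      rw [ha, div_eq_one_iff_eq hyx] at h
      exact hx1 (by linear_combination h)
    have hb0 : b ≠ 0 := div_ne_zero (mul_ne_zero hx0 hy1') hyx
    have hb1 : b ≠ 1 := by
      intro h
      rw [hb, div_eq_one_iff_eq hyx] at h
      have h2 : (x - 1) * y = 0 := by linear_combination h
      rcases mul_eq_zero.mp h2 with h3 | h3
      · exact hx1 (by linear_combination h3)
      · exact hy0 h3
    have hba : b / a = x := by
      rw [ha, hb]; field_simp
    have h1a : 1 - a = (1 - x)/(y - x) := by
      rw [ha]; field_simp; try ring
    have h1b : 1 - b = y*(1 - x)/(y - x) := by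
      rw [hb]; field_simp; try ring
    have hq : (1 - b)/(1 - a) = y := by
      rw [h1a, h1b]; field_simp; try ring
    have hab : a / b = 1 / x := by
      rw [ha, hb]; field_simp; try ring
    have hq' : (1 - a)/(1 - b) = 1 / y := by
      rw [h1a, h1b]; field_simp; try ring
    have hix0 : (1:ℂ)/x ≠ 0 := one_div_ne_zero hx0
    have hix1 : (1:ℂ)/x ≠ 1 := by
      intro h; rw [div_eq_one_iff_eq hx0] at h; exact hx1 h.symm
    have hiy0 : (1:ℂ)/y ≠ 0 := one_div_ne_zero hy0
    have hiy1 : (1:ℂ)/y ≠ 1 := by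
      intro h; rw [div_eq_one_iff_eq hy0] at h; exact hy1 h.symm
    have hA := h4 a b ha0 ha1 hb0 hb1 (by rw [hba]; exact hx0) (by rw [hba]; exact hx1)
      (by rw [hq]; exact hy0) (by rw [hq]; exact hy1)
    have hB := h4 b a hb0 hb1 ha0 ha1 (by rw [hab]; exact hix0) (by rw [hab]; exact hix1)
      (by rw [hq']; exact hiy0) (by rw [hq']; exact hiy1)
    rw [hba, hq] at hA
    rw [hab, hq'] at hB
    have key2 : a • f x + b • f (1/x) + (1 - a) • f y + (1 - b) • f (1/y) = 0 := by
      linear_combination (norm := module) hA + hB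
    have key3 := congrArg (fun m => (y - x) • m) key2
    simp only [smul_zero, smul_add, smul_smul] at key3
    have e1 : (y - x) * a = y - 1 := by rw [ha]; field_simp
    have e2 : (y - x) * b = x * (y - 1) := by rw [hb]; field_simp; try ring
    have e3 : (y - x) * (1 - a) = 1 - x := by rw [h1a]; field_simp
    have e4 : (y - x) * (1 - b) = y * (1 - x) := by rw [h1b]; field_simp; try ring
    rw [e1, e2, e3, e4] at key3
    linear_combination (norm := module) key3
  intro a ha0 ha1
  have hai0 : (1:ℂ)/a ≠ 0 := one_div_ne_zero ha0
  have hai1 : (1:ℂ)/a ≠ 1 := by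
    intro h; rw [div_eq_one_iff_eq ha0] at h; exact ha1 h.symm
  obtain ⟨x, hx⟩ : ∃ x : ℂ, x ∉ ({0, 1, a, 1/a} : Set ℂ) := by
    have hfin : ({0, 1, a, 1/a} : Set ℂ).Finite :=
      (((Set.finite_singleton _).insert _).insert _).insert _
    exact hfin.infinite_compl.nonempty
  simp only [Set.mem_insert_iff, Set.mem_singleton_iff, not_or] at hx
  obtain ⟨hx0, hx1, hxa, hxai⟩ := hx
  have h1 := key x a hx0 hx1 ha0 ha1 hxa
  have h2 := key x (1/a) hx0 hx1 hai0 hai1 hxai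
  rw [one_div_one_div] at h2
  have h3 : (2*(1 - x)) • (f a + a • f (1/a)) = 0 := by
    linear_combination (norm := match_scalars <;> field_simp <;> ring_nf) h1 + a • h2
  have hc : (2*(1 - x) : ℂ) ≠ 0 :=
    mul_ne_zero two_ne_zero (sub_ne_zero.mpr (Ne.symm hx1))
  have h5 : f a + a • f (1/a) = 0 := by
    have heq : f a + a • f (1/a) = (2*(1 - x) : ℂ)⁻¹ • ((2*(1 - x)) • (f a + a • f (1/a))) := by
      rw [smul_smul, inv_mul_cancel₀ hc, one_smul]
    rw [heq, h3, smul_zero]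
  have h6 : a • f (1/a) = -(f a) := by
    linear_combination (norm := module) h5
  have h7 : f (1/a) = (1/a) • (a • f (1/a)) := by
    rw [smul_smul, one_div, inv_mul_cancel₀ ha0, one_smul]
  rw [h7, h6, smul_neg, neg_smul]
end

section
/- The function r(x) = -x·log|x| - (1-x)·log|1-x|, defined for real x ∉ {0,1}, satisfies the 4-term relation r(b) - r(a) + (1-b)·r(a/(1-b)) - (1-a)·r(b/(1-a)) = 0 for all real a, b with a, b, a+b ∉ {0,1} and a/(1-b), b/(1-a) ∉ {0,1}. -/
noncomputable def rreg (x : ℝ) : ℝ := -x * Real.log |x| - (1 - x) * Real.log |1 - x|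

theorem rreg_four_term (a b : ℝ)
    (ha0 : a ≠ 0) (ha1 : a ≠ 1) (hb0 : b ≠ 0) (hb1 : b ≠ 1)
    (hab0 : a + b ≠ 0) (hab1 : a + b ≠ 1)
    (h10 : a / (1 - b) ≠ 0) (h11 : a / (1 - b) ≠ 1)
    (h20 : b / (1 - a) ≠ 0) (h21 : b / (1 - a) ≠ 1) :
    rreg b - rreg a + (1 - b) * rreg (a / (1 - b)) - (1 - a) * rreg (b / (1 - a)) = 0 := by
  have h1b : (1:ℝ) - b ≠ 0 := sub_ne_zero.mpr (Ne.symm hb1)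
  have h1a : (1:ℝ) - a ≠ 0 := sub_ne_zero.mpr (Ne.symm ha1)
  have hs : (1:ℝ) - a - b ≠ 0 := by intro h; apply hab1; linarith
  have e1 : 1 - a/(1-b) = (1-a-b)/(1-b) := by field_simp; ring
  have e2 : 1 - b/(1-a) = (1-a-b)/(1-a) := by field_simp
  simp only [rreg, Real.log_abs, e1, e2, Real.log_div ha0 h1b, Real.log_div hb0 h1a,
    Real.log_div hs h1b, Real.log_div hs h1a]
  field_simp
  ring
end

section
/- Let M be a ℂ-module and f : (ℂ \ {0,1}) × 2ℤ × 2ℤ → M a function satisfying: (i) f(x,p,q) - f(x,p,q') = f(x,p,q-2) - f(x,p,q'-2) and (ii) f(x,p,q) - f(x,p',q) = f(x,p-2,q) - f(x,p'-2,q) for all x and even p,p',q,q'. Then for all even p, q: 4·f(x,p,q) = pq·f(x,2,2) - p(q-2)·f(x,2,0) - q(p-2)·f(x,0,2) + (pq - 2p - 2q + 4)·f(x,0,0). -/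
/-!
Relation (i) says that `q ↦ f x p q` has the same step `f x p q - f x p (q - 2)` at every even `q`,
so it is affine along `2ℤ`; likewise (ii) in `p`. Expanding first in `q` and then in `p` shows that
`f x p q` is bilinear in `(p/2, q/2)`, hence determined by its four values at `p, q ∈ {0, 2}`.
-/

section

variable {M : Type*} [AddCommGroup M]

lemma eq_add_zsmul_of_even_step_eq (g : ℤ → M)
    (hg : ∀ k : ℤ, g (2 * k + 2) - g (2 * k) = g 2 - g 0) (k : ℤ) :
    g (2 * k) = g 0 + k • (g 2 - g 0) := by
  induction k using Int.induction_on with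
  | zero => simp
  | succ k ih =>
    rw [show 2 * ((k : ℤ) + 1) = 2 * k + 2 by ring, ← sub_add_cancel (g (2 * k + 2)) (g (2 * k)),
      hg, ih, add_zsmul, one_zsmul]
    abel
  | pred k ih =>
    have step := hg (-k - 1)
    rw [show 2 * (-(k : ℤ) - 1) + 2 = 2 * -k by ring] at step
    rw [show 2 * (-(k : ℤ) - 1) = 2 * (-k - 1) by ring, ← sub_sub_cancel (g (2 * -k)) (g _), step,
      ih, sub_zsmul, one_zsmul]
    abel

lemma eq_bilinear_of_even_steps_eq (F : ℤ → ℤ → M)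
    (hrow : ∀ a k : ℤ, F (2 * a) (2 * k + 2) - F (2 * a) (2 * k) = F (2 * a) 2 - F (2 * a) 0)
    (hcol : ∀ b : ℤ, Even b → ∀ k : ℤ, F (2 * k + 2) b - F (2 * k) b = F 2 b - F 0 b) (a b : ℤ) :
    F (2 * a) (2 * b) = F 0 0 + a • (F 2 0 - F 0 0) + b • (F 0 2 - F 0 0)
      + (a * b) • (F 2 2 - F 2 0 - F 0 2 + F 0 0) := by
  rw [eq_add_zsmul_of_even_step_eq (F (2 * a)) (hrow a),
    eq_add_zsmul_of_even_step_eq (F · 0) (hcol 0 .zero),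
    eq_add_zsmul_of_even_step_eq (F · 2) (hcol 2 even_two)]
  module

end

theorem transfer_expansion {M : Type*} [AddCommGroup M] [Module ℂ M]
    (f : ℂ → ℤ → ℤ → M)
    (h1 : ∀ (x : ℂ) (p q q' : ℤ), Even p → Even q → Even q' →
      f x p q - f x p q' = f x p (q - 2) - f x p (q' - 2))
    (h2 : ∀ (x : ℂ) (p p' q : ℤ), Even p → Even p' → Even q →
      f x p q - f x p' q = f x (p - 2) q - f x (p' - 2) q) :
    ∀ (x : ℂ) (p q : ℤ), Even p → Even q →
      (4 : ℂ) • f x p q =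
        ((p : ℂ) * q) • f x 2 2 - ((p : ℂ) * (q - 2)) • f x 2 0
          - ((q : ℂ) * (p - 2)) • f x 0 2
          + ((p : ℂ) * q - 2 * p - 2 * q + 4) • f x 0 0 := by
  rintro x _ _ ⟨a, rfl⟩ ⟨b, rfl⟩
  have hrow : ∀ a k : ℤ, f x (2 * a) (2 * k + 2) - f x (2 * a) (2 * k)
      = f x (2 * a) 2 - f x (2 * a) 0 := fun a k => by
    rw [sub_eq_sub_iff_sub_eq_sub]
    simpa using h1 x (2 * a) (2 * k + 2) 2 (even_two_mul a) ⟨k + 1, by ring⟩ even_two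
  have hcol : ∀ q : ℤ, Even q → ∀ k : ℤ, f x (2 * k + 2) q - f x (2 * k) q = f x 2 q - f x 0 q :=
    fun q hq k => by
      rw [sub_eq_sub_iff_sub_eq_sub]
      simpa using h2 x (2 * k + 2) 2 q ⟨k + 1, by ring⟩ even_two hq
  rw [← two_mul, ← two_mul, eq_bilinear_of_even_steps_eq (f x) hrow hcol]
  simp only [← Int.cast_smul_eq_zsmul ℂ]
  push_cast
  module
end

section
/- Let M be a ℂ-module and f : (ℂ\{0,1}) × 2ℤ × 2ℤ → M satisfying the extended 4-term relation: for all admissible configurations (y, x, x/(1-y), y/(1-x)) with shifts ((p₀,q₀),(p₁,q₁),(q₀+p₁,-q₀+r),(p₀+q₁,r-q₁)) (p₀,q₀,p₁,q₁,r even), f(y,p₀,q₀) - f(x,p₁,q₁) + (1-y)·f(x/(1-y), q₀+p₁, -q₀+r) - (1-x)·f(y/(1-x), p₀+q₁, r-q₁) = 0. Then for all x, y in the admissible set and all even p₀,q₀,p₁,q₁: f(y,p₀-2,q₀+2) - f(y,p₀,q₀) = f(x,p₁-2,q₁+2) - f(x,p₁,q₁). -/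
theorem cx_independent {M : Type*} [AddCommGroup M] [Module ℂ M]
    (f : ℂ → ℤ → ℤ → M) (x y : ℂ)
    (hy0 : y ≠ 0) (hy1 : y ≠ 1) (hx0 : x ≠ 0) (hx1 : x ≠ 1)
    (hxy0 : x / (1 - y) ≠ 0) (hxy1 : x / (1 - y) ≠ 1)
    (hyx0 : y / (1 - x) ≠ 0) (hyx1 : y / (1 - x) ≠ 1)
    (h4 : ∀ p₀ q₀ p₁ q₁ r : ℤ, Even p₀ → Even q₀ → Even p₁ → Even q₁ → Even r →
      f y p₀ q₀ - f x p₁ q₁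
        + (1 - y) • f (x / (1 - y)) (q₀ + p₁) (-q₀ + r)
        - (1 - x) • f (y / (1 - x)) (p₀ + q₁) (r - q₁) = 0) :
    ∀ p₀ q₀ p₁ q₁ : ℤ, Even p₀ → Even q₀ → Even p₁ → Even q₁ →
      f y (p₀ - 2) (q₀ + 2) - f y p₀ q₀ = f x (p₁ - 2) (q₁ + 2) - f x p₁ q₁ := by
  intro p₀ q₀ p₁ q₁ h0 h1 h2 h3
  have A := h4 p₀ q₀ p₁ q₁ 0 h0 h1 h2 h3 Even.zero
  have B := h4 (p₀ - 2) (q₀ + 2) (p₁ - 2) (q₁ + 2) 2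
    (h0.sub (even_two)) (h1.add even_two) (h2.sub even_two) (h3.add even_two) even_two
  rw [show q₀ + 2 + (p₁ - 2) = q₀ + p₁ from by ring,
    show -(q₀ + 2) + 2 = -q₀ + 0 from by ring,
    show p₀ - 2 + (q₁ + 2) = p₀ + q₁ from by ring,
    show (2 : ℤ) - (q₁ + 2) = 0 - q₁ from by ring] at B
  have := sub_eq_zero.mpr (B.trans A.symm)
  rw [← sub_eq_zero]
  rw [← this]
  abel
end

section
/- Let M be a ℂ-module and f : (ℂ\{0,1}) × 2ℤ × 2ℤ → M satisfying the extended 4-term relation f(y,p₀,q₀) - f(x,p₁,q₁) + (1-y)·f(x/(1-y), q₀+p₁, -q₀+r) - (1-x)·f(y/(1-x), p₀+q₁, r-q₁) = 0 for all admissible (x,y) with 0 < y < x < x+y < 1 and all even p₀,q₀,p₁,q₁,r. Define {x} := -(1/(1-x))·(f(x,0,2) - f(x,0,0)). Then {x/(1-y)} = {y/(1-x)} for all admissible (x,y). -/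
theorem bracket_equality {M : Type*} [AddCommGroup M] [Module ℂ M]
    (f : ℂ → ℤ → ℤ → M) (x y : ℝ)
    (hy : 0 < y) (hyx : y < x) (hxy : x + y < 1)
    (h4 : ∀ p₀ q₀ p₁ q₁ r : ℤ, Even p₀ → Even q₀ → Even p₁ → Even q₁ → Even r →
      f (y : ℂ) p₀ q₀ - f (x : ℂ) p₁ q₁
        + ((1 : ℂ) - y) • f ((x : ℂ) / (1 - y)) (q₀ + p₁) (-q₀ + r)
        - ((1 : ℂ) - x) • f ((y : ℂ) / (1 - x)) (p₀ + q₁) (r - q₁) = 0) :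
    -(((1 : ℂ) - (x : ℂ) / (1 - y))⁻¹) •
        (f ((x : ℂ) / (1 - y)) 0 2 - f ((x : ℂ) / (1 - y)) 0 0)
      = -(((1 : ℂ) - (y : ℂ) / (1 - x))⁻¹) •
        (f ((y : ℂ) / (1 - x)) 0 2 - f ((y : ℂ) / (1 - x)) 0 0) := by
  have hx : 0 < x := hy.trans hyx
  have h1y : (1 : ℝ) - y ≠ 0 := by nlinarith
  have h1x : (1 : ℝ) - x ≠ 0 := by nlinarith
  have h1xy : (1 : ℝ) - x - y ≠ 0 := by nlinarith
  have h1y' : (1 : ℂ) - (y : ℂ) ≠ 0 := by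
    rw [show (1 : ℂ) - (y : ℂ) = ((1 - y : ℝ) : ℂ) by push_cast; ring]
    exact_mod_cast Complex.ofReal_ne_zero.mpr h1y
  have h1x' : (1 : ℂ) - (x : ℂ) ≠ 0 := by
    rw [show (1 : ℂ) - (x : ℂ) = ((1 - x : ℝ) : ℂ) by push_cast; ring]
    exact_mod_cast Complex.ofReal_ne_zero.mpr h1x
  have h1xy' : (1 : ℂ) - (x : ℂ) - (y : ℂ) ≠ 0 := by
    rw [show (1 : ℂ) - (x : ℂ) - (y : ℂ) = ((1 - x - y : ℝ) : ℂ) by push_cast; ring]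
    exact_mod_cast Complex.ofReal_ne_zero.mpr h1xy
  have e2 := h4 0 0 0 0 2 Even.zero Even.zero Even.zero Even.zero (by decide)
  have e0 := h4 0 0 0 0 0 Even.zero Even.zero Even.zero Even.zero Even.zero
  simp only [add_zero, zero_add, neg_zero, sub_zero, zero_sub] at e2 e0
  have key : ((1 : ℂ) - y) • (f ((x : ℂ) / (1 - y)) 0 2 - f ((x : ℂ) / (1 - y)) 0 0)
      = ((1 : ℂ) - x) • (f ((y : ℂ) / (1 - x)) 0 2 - f ((y : ℂ) / (1 - x)) 0 0) := by
    have := sub_eq_zero.mpr (e2.trans e0.symm)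
    rw [smul_sub, smul_sub]
    abel_nf
    abel_nf at this
    linear_combination (norm := abel) this
  have hc1 : ((1 : ℂ) - (x : ℂ) / (1 - y))⁻¹ = ((1 : ℂ) - x - y)⁻¹ * ((1 : ℂ) - y) := by
    rw [show (1 : ℂ) - (x : ℂ) / (1 - y) = ((1 : ℂ) - x - y) / (1 - y) by field_simp; ring,
      inv_div, div_eq_mul_inv, mul_comm]
  have hc2 : ((1 : ℂ) - (y : ℂ) / (1 - x))⁻¹ = ((1 : ℂ) - x - y)⁻¹ * ((1 : ℂ) - x) := by
    rw [show (1 : ℂ) - (y : ℂ) / (1 - x) = ((1 : ℂ) - x - y) / (1 - x) by field_simp,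
      inv_div, div_eq_mul_inv, mul_comm]
  rw [hc1, hc2, neg_smul, neg_smul, mul_smul, mul_smul, key]
end

section
/- Let M be a ℂ-module and f : (ℂ\{0,1}) × 2ℤ × 2ℤ → M satisfying the extended 4-term relation f(y,p₀,q₀) - f(x,p₁,q₁) + (1-y)·f(x/(1-y), q₀+p₁, -q₀+r) - (1-x)·f(y/(1-x), p₀+q₁, r-q₁) = 0 for all admissible (x,y) and even parameters, together with the fact that c := f(w,2,-2) - f(w,0,0) is independent of w ∈ ℂ\{0,1}. Then for all admissible x: f(x,0,2) - f(x,0,0) = -(1-x)·c, i.e. the element {x} := -(1/(1-x))·(f(x,0,2) - f(x,0,0)) equals c. -/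
theorem kernel_generated_by_c {M : Type*} [AddCommGroup M] [Module ℂ M]
    (f : ℂ → ℤ → ℤ → M) (c : M)
    (h4 : ∀ x y : ℝ, 0 < y → y < x → x + y < 1 →
      ∀ p₀ q₀ p₁ q₁ r : ℤ, Even p₀ → Even q₀ → Even p₁ → Even q₁ → Even r →
      f (y : ℂ) p₀ q₀ - f (x : ℂ) p₁ q₁
        + ((1 : ℂ) - y) • f ((x : ℂ) / (1 - y)) (q₀ + p₁) (-q₀ + r)
        - ((1 : ℂ) - x) • f ((y : ℂ) / (1 - x)) (p₀ + q₁) (r - q₁) = 0)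
    (hc : ∀ w : ℂ, w ≠ 0 → w ≠ 1 → f w 2 (-2) - f w 0 0 = c) :
    ∀ x : ℝ, 0 < x → x < 1 →
      f (x : ℂ) 0 2 - f (x : ℂ) 0 0 = -((1 : ℂ) - x) • c := by
  intro x hx0 hx1
  set y : ℝ := min x (1 - x) / 2 with hy
  have hy0 : 0 < y := by
    have : 0 < min x (1 - x) := lt_min hx0 (by linarith)
    positivity
  have hyx : y < x := by
    have h1 : min x (1 - x) ≤ x := min_le_left _ _
    have : y ≤ x / 2 := by rw [hy]; linarith
    linarith
  have hxy : x + y < 1 := by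
    have h1 : min x (1 - x) ≤ 1 - x := min_le_right _ _
    have : y ≤ (1 - x) / 2 := by rw [hy]; linarith
    linarith
  have hA := h4 x y hy0 hyx hxy 0 0 0 0 0 Even.zero Even.zero Even.zero Even.zero Even.zero
  have hB := h4 x y hy0 hyx hxy 0 0 0 2 0 Even.zero Even.zero Even.zero even_two Even.zero
  norm_num at hA hB
  set w : ℂ := (y : ℂ) / (1 - x) with hw
  have hwne0 : w ≠ 0 := by
    rw [hw]
    apply div_ne_zero
    · exact_mod_cast hy0.ne'
    · intro h
      have : (x : ℂ) = 1 := by linear_combination -h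
      have : x = (1 : ℝ) := by exact_mod_cast this
      linarith
  have hwne1 : w ≠ 1 := by
    rw [hw]
    intro h
    have hden : (1 : ℂ) - x ≠ 0 := by
      intro h'
      have : (x : ℂ) = 1 := by linear_combination -h'
      have : x = (1 : ℝ) := by exact_mod_cast this
      linarith
    rw [div_eq_one_iff_eq hden] at h
    have h' : ((y : ℝ) : ℂ) = ((1 - x : ℝ) : ℂ) := by push_cast; exact h
    have : y = 1 - x := by exact_mod_cast h'
    linarith
  have hcw := hc w hwne0 hwne1
  have key : f (x : ℂ) 0 2 - f (x : ℂ) 0 0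
      = -((1 : ℂ) - x) • (f w 2 (-2) - f w 0 0) := by
    linear_combination (norm := module) hA - hB
  rw [key, hcw]
end
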